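/- Let V > 1, c' > 0, and suppose λ₁ ≤ λ₂ ≤ … is a sequence of positive reals such that for every positive integer k, the number of λ's lying in the interval (k/(c'·log V), (k+1)/(c'·log V)] is at most C·V/log V for a constant C. Then for α > 0, the product of all λ's lying in (1/(c'·log V), α] is at least (⌊α·c'·log V⌋! / (c'·log V)^{⌊α·c'·log V⌋})^{C·V/log V}, and in particular log of this product is ≥ −C·V·(α·log(1/α) + O(α)) as α → 0. -/
import Mathlib


attribute [local instance] Classical.propDecidable

open Finset

/-- Eigenvalue counting estimate: if each interval `(k/(c'·log V), (k+1)/(c'·log V)]`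
contains at most `C·V/log V` of the `λ_i`'s, then the product of the `λ_i` lying in
`(1/(c'·log V), α]` is at least `(⌊α·c'·log V⌋! / (c'·log V)^⌊α·c'·log V⌋)^{C·V/log V}`. -/
theorem small_eigenvalue_product_lower_bound {ι : Type*} (s : Finset ι) (lam : ι → ℝ)
    (V c' C α : ℝ) (hV : 1 < V) (hc' : 0 < c') (hC : 0 < C) (hα : 0 < α) (hα1 : α ≤ 1)
    (hcount : ∀ k : ℕ, 0 < k →
      ((s.filter fun i => (k : ℝ) / (c' * Real.log V) < lam i ∧
        lam i ≤ ((k : ℝ) + 1) / (c' * Real.log V)).card : ℝ) ≤ C * V / Real.log V) :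
    ((Nat.factorial ⌊α * c' * Real.log V⌋₊ : ℝ) /
        (c' * Real.log V) ^ ⌊α * c' * Real.log V⌋₊) ^ (C * V / Real.log V) ≤
      ∏ i ∈ s.filter fun i => 1 / (c' * Real.log V) < lam i ∧ lam i ≤ α, lam i := by
  have hlogV : 0 < Real.log V := Real.log_pos hV
  set L : ℝ := c' * Real.log V with hLdef
  have hL : 0 < L := mul_pos hc' hlogV
  set M : ℝ := C * V / Real.log V with hMdef
  have hM : 0 < M := div_pos (mul_pos hC (lt_trans one_pos hV)) hlogV
  set N : ℕ := ⌊α * c' * Real.log V⌋₊ with hNdef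
  have hNle : (N : ℝ) ≤ α * L := by
    have h0 : (0:ℝ) ≤ α * c' * Real.log V := by positivity
    have := Nat.floor_le h0
    calc (N:ℝ) ≤ α * c' * Real.log V := this
      _ = α * L := by rw [hLdef, mul_assoc]
  set T : Finset ι := s.filter fun i => 1 / L < lam i ∧ lam i ≤ α with hTdef
  set Tk : ℕ → Finset ι :=
    fun k => T.filter fun i => (k:ℝ)/L < lam i ∧ lam i ≤ ((k:ℝ)+1)/L with hTkdef
  -- coverage
  have hcover : T = (Finset.Icc 1 N).biUnion Tk := by
    apply Finset.Subset.antisymm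
    · intro i hi
      have hi' := hi
      rw [hTdef, Finset.mem_filter] at hi'
      obtain ⟨his, h1, h2⟩ := hi'
      have hlampos : 0 < lam i := lt_trans (by positivity) h1
      have hxL : 1 < lam i * L := by
        rw [div_lt_iff₀ hL] at h1; linarith
      set k : ℕ := ⌈lam i * L⌉₊ - 1 with hkdef
      have hceil2 : 2 ≤ ⌈lam i * L⌉₊ := by
        have : 1 < ⌈lam i * L⌉₊ := by
          rw [Nat.lt_ceil]; exact_mod_cast hxL
        omega
      have hk1 : 1 ≤ k := by omega
      have hkcast : (k:ℝ) = (⌈lam i * L⌉₊ : ℝ) - 1 := by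
        have h' : (⌈lam i * L⌉₊ : ℕ) = k + 1 := by omega
        rw [h']; push_cast; ring
      have hklt : (k:ℝ) < lam i * L := by
        rw [hkcast]
        have := Nat.ceil_lt_add_one (le_of_lt (by positivity : (0:ℝ) < lam i * L))
        linarith
      have hkge : lam i * L ≤ (k:ℝ) + 1 := by
        rw [hkcast]
        have := Nat.le_ceil (lam i * L)
        linarith
      have hkN : k ≤ N := by
        have : (k:ℝ) < α * L := lt_of_lt_of_le hklt (by
          have := mul_le_mul_of_nonneg_right h2 (le_of_lt hL)
          linarith)
        have h' : (k:ℝ) ≤ α * c' * Real.log V := by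
          rw [mul_assoc]; exact le_of_lt this
        exact Nat.le_floor h'
      refine Finset.mem_biUnion.2 ⟨k, Finset.mem_Icc.2 ⟨hk1, hkN⟩, ?_⟩
      rw [hTkdef]
      refine Finset.mem_filter.2 ⟨hi, ?_, ?_⟩
      · rw [div_lt_iff₀ hL]; linarith
      · rw [le_div_iff₀ hL]; linarith
    · intro i hi
      obtain ⟨k, _, hik⟩ := Finset.mem_biUnion.1 hi
      rw [hTkdef, Finset.mem_filter] at hik
      exact hik.1
  -- disjointness
  have hkey : ∀ x y : ℕ, x < y → Disjoint (Tk x) (Tk y) := by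
    intro x y h
    rw [Finset.disjoint_left]
    intro i hix hiy
    rw [hTkdef, Finset.mem_filter] at hix hiy
    have h1 : lam i ≤ ((x:ℝ)+1)/L := hix.2.2
    have h2 : (y:ℝ)/L < lam i := hiy.2.1
    have hxy' : ((x:ℝ)+1) ≤ (y:ℝ) := by exact_mod_cast h
    have : ((x:ℝ)+1)/L ≤ (y:ℝ)/L := by gcongr
    linarith
  have hdisj : ∀ x ∈ Finset.Icc 1 N, ∀ y ∈ Finset.Icc 1 N, x ≠ y →
      Disjoint (Tk x) (Tk y) := by
    intro x _ y _ hxy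
    rcases lt_or_gt_of_ne hxy with h | h
    · exact hkey x y h
    · exact (hkey y x h).symm
  -- positivity of all lam on T
  have hlam_pos : ∀ i ∈ T, 0 < lam i := by
    intro i hi
    rw [hTdef, Finset.mem_filter] at hi
    exact lt_trans (by positivity) hi.2.1
  -- per-interval bound
  have hstep : ∀ k ∈ Finset.Icc 1 N, ((k:ℝ)/L) ^ M ≤ ∏ i ∈ Tk k, lam i := by
    intro k hk
    rw [Finset.mem_Icc] at hk
    have hk1 : (1:ℝ) ≤ (k:ℝ) := by exact_mod_cast hk.1
    have hbase_pos : 0 < (k:ℝ)/L := by positivity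
    have hbase_le : (k:ℝ)/L ≤ 1 := by
      rw [div_le_one hL]
      calc (k:ℝ) ≤ (N:ℝ) := by exact_mod_cast hk.2
        _ ≤ α * L := hNle
        _ ≤ 1 * L := by nlinarith
        _ = L := one_mul L
    have hcard : ((Tk k).card : ℝ) ≤ M := by
      have hsub : Tk k ⊆ s.filter fun i => (k:ℝ)/L < lam i ∧ lam i ≤ ((k:ℝ)+1)/L := by
        intro i hi
        rw [hTkdef, Finset.mem_filter] at hi
        rw [Finset.mem_filter]
        rw [hTdef, Finset.mem_filter] at hi
        exact ⟨hi.1.1, hi.2⟩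
      have := Finset.card_le_card hsub
      calc ((Tk k).card : ℝ) ≤ _ := by exact_mod_cast this
        _ ≤ M := hcount k hk.1
    calc ((k:ℝ)/L) ^ M ≤ ((k:ℝ)/L) ^ (((Tk k).card : ℝ)) :=
          Real.rpow_le_rpow_of_exponent_ge hbase_pos hbase_le hcard
      _ = ((k:ℝ)/L) ^ ((Tk k).card) := Real.rpow_natCast _ _
      _ = ∏ _i ∈ Tk k, (k:ℝ)/L := (Finset.prod_const _).symm
      _ ≤ ∏ i ∈ Tk k, lam i := by
          apply Finset.prod_le_prod
          · intro i _; positivity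
          · intro i hi
            rw [hTkdef, Finset.mem_filter] at hi
            exact le_of_lt hi.2.1
  -- put together
  have hprod : ∏ i ∈ T, lam i = ∏ k ∈ Finset.Icc 1 N, ∏ i ∈ Tk k, lam i := by
    rw [hcover]; exact Finset.prod_biUnion hdisj
  have hmain : ∏ k ∈ Finset.Icc 1 N, ((k:ℝ)/L) ^ M ≤ ∏ i ∈ T, lam i := by
    rw [hprod]
    exact Finset.prod_le_prod (fun k _ => by positivity) hstep
  have hLHS : ∏ k ∈ Finset.Icc 1 N, ((k:ℝ)/L) ^ M
      = ((Nat.factorial N : ℝ) / L ^ N) ^ M := by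
    rw [Real.finset_prod_rpow _ _ (fun k _ => by positivity) M]
    congr 1
    rw [Finset.prod_div_distrib, Finset.prod_const, Nat.card_Icc]
    have hfac : ∏ k ∈ Finset.Icc 1 N, k = Nat.factorial N := by
      rw [← Finset.Ico_add_one_right_eq_Icc]
      exact Finset.prod_Ico_id_eq_factorial N
    have hnum : ∏ k ∈ Finset.Icc 1 N, (k:ℝ) = (Nat.factorial N : ℝ) := by
      rw [← Nat.cast_prod]; exact_mod_cast hfac
    rw [hnum]
    have hN1 : N + 1 - 1 = N := by omega
    rw [hN1]
  calc ((Nat.factorial N : ℝ) / L ^ N) ^ M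
      = ∏ k ∈ Finset.Icc 1 N, ((k:ℝ)/L) ^ M := hLHS.symm
    _ ≤ ∏ i ∈ T, lam i := hmain
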